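/- Fix ε > 0, P_b > 0 and q_b ∈ (0,1] for each b ∈ B, let Y be the set of (α, π) ∈ X satisfying ∑_{i ∈ I} ∑_{b ∈ B} α_{kbi} r_{kbi} ≥ d_k for all k ∈ K, assume Y is nonempty, and define F(α) = ∑_{b ∈ B} P_b [ (1 − q_b) ρ_b(α) + q_b log(ε + ρ_b(α)) / log(1 + ε^{−1}) ] and, for any α with ρ_b(α) ≥ 0, the weights w_b(α) = (1 − q_b) P_b + q_b P_b / ( log(1 + ε^{−1}) (ε + ρ_b(α)) ). Let ((α^{(t)}, π^{(t)}))_{t ≥ 0} be a sequence in Y such that for every t ≥ 1, (α^{(t)}, π^{(t)}) minimizes ∑_{b ∈ B} w_b(α^{(t−1)}) ρ_b(α) over Y. Then every limit point (ᾱ, π̄) of this sequence satisfies the first-order stationarity condition ∑_{b ∈ B} w_b(ᾱ) ( ρ_b(α) − ρ_b(ᾱ) ) ≥ 0 for all (α, π) ∈ Y. -/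

import Mathlib

open Finset Filter Topology

/-- Membership in the constraint set `X`. -/
def memX {K B I : Type*} [Fintype K] [Fintype I]
    (α : K → B → I → ℝ) (π : I → ℝ) : Prop :=
  (∀ k b i, 0 ≤ α k b i) ∧ (∀ i, 0 ≤ π i) ∧
    (∀ b i, ∑ k, α k b i ≤ π i) ∧ (∑ i, π i = 1)

/-- Usage of base station `b`. -/
def ρ {K B I : Type*} [Fintype K] [Fintype I]
    (α : K → B → I → ℝ) (b : B) : ℝ :=
  ∑ k, ∑ i, α k b i

/-!
Since `log` is concave, the surrogate `F` lies below its linearization at any point of `Y`, with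
equality at the point of linearization. The convex–concave procedure is therefore a
majorization–minimization scheme: `F(α⁽ᵗ⁺¹⁾) ≤ F(α⁽ᵗ⁾) + ∑_b w_b(α⁽ᵗ⁾) (ρ_b(α) - ρ_b(α⁽ᵗ⁾))` for
every feasible `α`, and taking `α = α⁽ᵗ⁾` shows that `F(α⁽ᵗ⁾)` decreases. A decreasing sequence
with a convergent subsequence converges, so `F(α⁽ᵗ⁺¹⁾) → F(ᾱ)` along the subsequence as well,
and passing to the limit in the majorization inequality gives
`F(ᾱ) ≤ F(ᾱ) + ∑_b w_b(ᾱ) (ρ_b(α) - ρ_b(ᾱ))`.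
-/

section MajorizationMinimization

variable {E : Type*} {Y : Set E} {F : E → ℝ} {G : E → E → ℝ} {x : ℕ → E}

theorem antitone_comp_of_majorize_minimize (hmaj : ∀ a ∈ Y, ∀ a' ∈ Y, F a' ≤ G a a')
    (hdiag : ∀ a ∈ Y, G a a = F a) (hxY : ∀ t, x t ∈ Y)
    (hmin : ∀ t, ∀ y ∈ Y, G (x t) (x (t + 1)) ≤ G (x t) y) : Antitone (F ∘ x) :=
  antitone_nat_of_succ_le fun t => calc
    F (x (t + 1)) ≤ G (x t) (x (t + 1)) := hmaj _ (hxY t) _ (hxY (t + 1))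
    _ ≤ G (x t) (x t) := hmin t _ (hxY t)
    _ = F (x t) := hdiag _ (hxY t)

theorem le_of_majorize_minimize_of_tendsto [TopologicalSpace E]
    (hmaj : ∀ a ∈ Y, ∀ a' ∈ Y, F a' ≤ G a a') (hdiag : ∀ a ∈ Y, G a a = F a) (hxY : ∀ t, x t ∈ Y)
    (hmin : ∀ t, ∀ y ∈ Y, G (x t) (x (t + 1)) ≤ G (x t) y)
    {φ : ℕ → ℕ} (hφ : StrictMono φ) {xbar : E} (hlim : Tendsto (x ∘ φ) atTop (𝓝 xbar))
    (hF : ContinuousAt F xbar) {y : E} (hy : y ∈ Y) (hG : ContinuousAt (G · y) xbar) :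
    F xbar ≤ G xbar y := by
  have hFx : Tendsto (F ∘ x) atTop (𝓝 (F xbar)) :=
    (tendsto_iff_tendsto_subseq_of_antitone
      (antitone_comp_of_majorize_minimize hmaj hdiag hxY hmin) hφ.tendsto_atTop).2
      (hF.tendsto.comp hlim)
  have hFnext : Tendsto (fun n => F (x (φ n + 1))) atTop (𝓝 (F xbar)) :=
    hFx.comp ((tendsto_add_atTop_nat 1).comp hφ.tendsto_atTop)
  exact le_of_tendsto_of_tendsto' hFnext (hG.tendsto.comp hlim)
    fun n => (hmaj _ (hxY _) _ (hxY _)).trans (hmin _ y hy)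

end MajorizationMinimization

theorem Real.log_le_log_add_sub_div {x y : ℝ} (hx : 0 < x) (hy : 0 < y) :
    Real.log y ≤ Real.log x + (y - x) / x := by
  have h := Real.log_le_sub_one_of_pos (div_pos hy hx)
  rw [Real.log_div hy.ne' hx.ne', div_sub_one hx.ne'] at h
  linarith

section Surrogate

variable (ε P q : ℝ)

noncomputable def surrogate (x : ℝ) : ℝ :=
  P * ((1 - q) * x + q * Real.log (ε + x) / Real.log (1 + ε⁻¹))

noncomputable def surrogateWeight (x : ℝ) : ℝ :=
  (1 - q) * P + q * P / (Real.log (1 + ε⁻¹) * (ε + x))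

variable {ε P q}

theorem log_one_add_inv_pos (hε : 0 < ε) : 0 < Real.log (1 + ε⁻¹) :=
  Real.log_pos (lt_add_of_pos_right 1 (inv_pos.2 hε))

theorem surrogate_le_add_weight_mul (hε : 0 < ε) (hqP : 0 ≤ q * P) {x y : ℝ}
    (hx : 0 < ε + x) (hy : 0 < ε + y) :
    surrogate ε P q y ≤ surrogate ε P q x + surrogateWeight ε P q x * (y - x) := by
  have hL := log_one_add_inv_pos hε
  have hlog := mul_le_mul_of_nonneg_left (Real.log_le_log_add_sub_div hx hy)
    (div_nonneg hqP hL.le)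
  have hgap : surrogate ε P q x + surrogateWeight ε P q x * (y - x) - surrogate ε P q y
      = q * P / Real.log (1 + ε⁻¹) * (Real.log (ε + x) + (ε + y - (ε + x)) / (ε + x))
        - q * P / Real.log (1 + ε⁻¹) * Real.log (ε + y) := by
    unfold surrogate surrogateWeight
    field_simp
    ring
  linarith

theorem continuousAt_surrogate {x : ℝ} (hx : ε + x ≠ 0) : ContinuousAt (surrogate ε P q) x := by
  unfold surrogate
  have hlog : ContinuousAt (fun z => Real.log (ε + z)) x :=
    (Real.continuousAt_log hx).comp (continuous_const_add ε).continuousAt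
  fun_prop

theorem continuousAt_surrogateWeight (hε : 0 < ε) {x : ℝ} (hx : ε + x ≠ 0) :
    ContinuousAt (surrogateWeight ε P q) x := by
  unfold surrogateWeight
  exact continuousAt_const.add <| continuousAt_const.div (by fun_prop)
    (mul_ne_zero (log_one_add_inv_pos hε).ne' hx)

end Surrogate

section Usage

variable {K B I : Type*} [Fintype K] [Fintype I]

theorem continuous_ρ (b : B) : Continuous fun α : K → B → I → ℝ => ρ α b := by
  unfold ρ
  fun_prop

theorem ρ_nonneg_of_memX {α : K → B → I → ℝ} {π : I → ℝ} (h : memX α π) (b : B) :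
    0 ≤ ρ α b :=
  sum_nonneg fun k _ => sum_nonneg fun i _ => h.1 k b i

variable [Fintype B] {ε : ℝ} {P q : B → ℝ}

variable (ε P q) in
noncomputable def surrogateObjective (α : K → B → I → ℝ) : ℝ :=
  ∑ b, surrogate ε (P b) (q b) (ρ α b)

variable (ε P q) in
noncomputable def surrogateLinearization (α α' : K → B → I → ℝ) : ℝ :=
  surrogateObjective ε P q α + ∑ b, surrogateWeight ε (P b) (q b) (ρ α b) * (ρ α' b - ρ α b)

theorem surrogateLinearization_self (α : K → B → I → ℝ) :
    surrogateLinearization ε P q α α = surrogateObjective ε P q α := by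
  simp [surrogateLinearization]

theorem surrogateObjective_le_linearization (hε : 0 < ε) (hqP : ∀ b, 0 ≤ q b * P b)
    {α α' : K → B → I → ℝ} (hα : ∀ b, 0 ≤ ρ α b) (hα' : ∀ b, 0 ≤ ρ α' b) :
    surrogateObjective ε P q α' ≤ surrogateLinearization ε P q α α' := by
  rw [surrogateLinearization, surrogateObjective, surrogateObjective, ← sum_add_distrib]
  exact sum_le_sum fun b _ => surrogate_le_add_weight_mul hε (hqP b)
    (by linarith [hα b]) (by linarith [hα' b])

theorem continuousAt_surrogateObjective {α : K → B → I → ℝ} (hα : ∀ b, ε + ρ α b ≠ 0) :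
    ContinuousAt (surrogateObjective ε P q) α :=
  tendsto_finsetSum _ fun b _ =>
    (continuousAt_surrogate (hα b)).tendsto.comp ((continuous_ρ b).tendsto α)

theorem continuousAt_surrogateLinearization (hε : 0 < ε) {α : K → B → I → ℝ}
    (hα : ∀ b, ε + ρ α b ≠ 0) (α' : K → B → I → ℝ) :
    ContinuousAt (surrogateLinearization ε P q · α') α :=
  (continuousAt_surrogateObjective hα).add <| tendsto_finsetSum _ fun b _ =>
    ((continuousAt_surrogateWeight hε (hα b)).tendsto.comp ((continuous_ρ b).tendsto α)).mul
      (tendsto_const_nhds.sub ((continuous_ρ b).tendsto α))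

end Usage

theorem stmt_11_general {K B I : Type*} [Fintype K] [Fintype B] [Fintype I]
    (ε : ℝ) (hε : 0 < ε)
    (P q : B → ℝ) (hP : ∀ b, 0 < P b) (hq : ∀ b, 0 < q b ∧ q b ≤ 1)
    (r : K → B → I → ℝ) (d : K → ℝ)
    (inY : (K → B → I → ℝ) → (I → ℝ) → Prop)
    (hinY : ∀ α π, inY α π ↔
      memX α π ∧ ∀ k, d k ≤ ∑ i, ∑ b, α k b i * r k b i)
    (w : (K → B → I → ℝ) → B → ℝ)
    (hw : ∀ α b, w α b = (1 - q b) * P b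
        + q b * P b / (Real.log (1 + ε⁻¹) * (ε + ρ α b)))
    (αseq : ℕ → (K → B → I → ℝ)) (πseq : ℕ → (I → ℝ))
    (hseqY : ∀ t, inY (αseq t) (πseq t))
    (hstep : ∀ t : ℕ, 1 ≤ t →
      ∀ α π, inY α π →
        ∑ b, w (αseq (t - 1)) b * ρ (αseq t) b ≤ ∑ b, w (αseq (t - 1)) b * ρ α b)
    (αbar : K → B → I → ℝ) (πbar : I → ℝ)
    (φ : ℕ → ℕ) (hφ : StrictMono φ)
    (hlim : Filter.Tendsto (fun n => (αseq (φ n), πseq (φ n)))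
      Filter.atTop (nhds (αbar, πbar))) :
    ∀ α π, inY α π → 0 ≤ ∑ b, w αbar b * (ρ α b - ρ αbar b) := by
  intro α π hαπ
  obtain rfl : w = fun a b => surrogateWeight ε (P b) (q b) (ρ a b) :=
    funext fun a => funext fun b => hw a b
  have hρ : ∀ a p, inY a p → ∀ b, 0 ≤ ρ a b := fun a p h => ρ_nonneg_of_memX ((hinY a p).1 h).1
  have hαlim : Tendsto (αseq ∘ φ) atTop (𝓝 αbar) := (continuous_fst.tendsto _).comp hlim
  have hρbar : ∀ b, ε + ρ αbar b ≠ 0 := fun b => by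
    have : 0 ≤ ρ αbar b := ge_of_tendsto' (((continuous_ρ b).tendsto _).comp hαlim)
      fun n => hρ _ _ (hseqY (φ n)) b
    positivity
  have hmaj : ∀ a ∈ {a | ∃ p, inY a p}, ∀ a' ∈ {a | ∃ p, inY a p},
      surrogateObjective ε P q a' ≤ surrogateLinearization ε P q a a' :=
    fun a ⟨p, hp⟩ a' ⟨p', hp'⟩ => surrogateObjective_le_linearization hε
      (fun b => (mul_pos (hq b).1 (hP b)).le) (hρ a p hp) (hρ a' p' hp')
  have hmin : ∀ t, ∀ y ∈ {a | ∃ p, inY a p}, surrogateLinearization ε P q (αseq t) (αseq (t + 1))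
      ≤ surrogateLinearization ε P q (αseq t) y := by
    rintro t y ⟨p, hp⟩
    have := hstep (t + 1) le_add_self y p hp
    simp only [add_tsub_cancel_right] at this
    simp only [surrogateLinearization, mul_sub, sum_sub_distrib]
    linarith
  have key := le_of_majorize_minimize_of_tendsto hmaj (fun a _ => surrogateLinearization_self a)
    (fun t => ⟨_, hseqY t⟩) hmin hφ hαlim (continuousAt_surrogateObjective hρbar) ⟨π, hαπ⟩
    (continuousAt_surrogateLinearization hε hρbar α)
  exact le_add_iff_nonneg_right _ |>.1 key

/-- Convergence of the convex–concave (reweighted ℓ1) procedure: every limit point of the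
iterates satisfies the first-order stationarity condition for the smooth surrogate of the
ℓ0 power objective over the feasible set `Y`. -/
theorem stmt_11 {K B I : Type*} [Fintype K] [Fintype B] [Fintype I]
    [Nonempty K] [Nonempty B] [Nonempty I]
    (ε : ℝ) (hε : 0 < ε)
    (P q : B → ℝ) (hP : ∀ b, 0 < P b) (hq : ∀ b, 0 < q b ∧ q b ≤ 1)
    (r : K → B → I → ℝ) (hr : ∀ k b i, 0 ≤ r k b i) (d : K → ℝ)
    (inY : (K → B → I → ℝ) → (I → ℝ) → Prop)
    (hinY : ∀ α π, inY α π ↔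
      memX α π ∧ ∀ k, d k ≤ ∑ i, ∑ b, α k b i * r k b i)
    (hYne : ∃ α π, inY α π)
    (w : (K → B → I → ℝ) → B → ℝ)
    (hw : ∀ α b, w α b = (1 - q b) * P b
        + q b * P b / (Real.log (1 + ε⁻¹) * (ε + ρ α b)))
    (αseq : ℕ → (K → B → I → ℝ)) (πseq : ℕ → (I → ℝ))
    (hseqY : ∀ t, inY (αseq t) (πseq t))
    (hstep : ∀ t : ℕ, 1 ≤ t →
      ∀ α π, inY α π →
        ∑ b, w (αseq (t - 1)) b * ρ (αseq t) b ≤ ∑ b, w (αseq (t - 1)) b * ρ α b)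
    (αbar : K → B → I → ℝ) (πbar : I → ℝ)
    (φ : ℕ → ℕ) (hφ : StrictMono φ)
    (hlim : Filter.Tendsto (fun n => (αseq (φ n), πseq (φ n)))
      Filter.atTop (nhds (αbar, πbar))) :
    ∀ α π, inY α π → 0 ≤ ∑ b, w αbar b * (ρ α b - ρ αbar b) :=
  stmt_11_general ε hε P q hP hq r d inY hinY w hw αseq πseq hseqY hstep αbar πbar φ hφ hlim
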